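/- Take f(x) = log(1+x). For any weight function g and any 0 < β < α < 1, if A ⊆ ℕ satisfies |A ∩ [1,n]| = ⌊n^β⌋ for all n, then d_α(A) = lim_n |A∩[1,n]|/n^α = 0, while the upper f-density of weight g of A is positive. Consequently t^{f,g}_{(a_n)}(𝕋) ≠ t^{α}_{(a_n)}(𝕋) for any arithmetic sequence (a_n). -/

import Mathlib

open Filter Set

/-- A modulus function: nonnegative, vanishing exactly at 0, subadditive,
non-decreasing, right continuous at 0 (all on `[0,∞)`). -/
def IsModulus (f : ℝ → ℝ) : Prop :=
  (∀ x : ℝ, 0 ≤ x → 0 ≤ f x) ∧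
  (∀ x : ℝ, 0 ≤ x → (f x = 0 ↔ x = 0)) ∧
  (∀ x y : ℝ, 0 ≤ x → 0 ≤ y → f (x + y) ≤ f x + f y) ∧
  (∀ x y : ℝ, 0 ≤ x → x ≤ y → f x ≤ f y) ∧
  ContinuousWithinAt f (Set.Ici 0) 0

/-- An unbounded modulus function. -/
def IsUnboundedModulus (f : ℝ → ℝ) : Prop :=
  IsModulus f ∧ Tendsto f atTop atTop

/-- A weight function `g : ℕ → [0,∞)` with `g n → ∞` and `n / g n ↛ 0`. -/
def IsWeight (g : ℕ → ℝ) : Prop :=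
  (∀ n, 0 ≤ g n) ∧ Tendsto g atTop atTop ∧
  ¬ Tendsto (fun n : ℕ => (n : ℝ) / g n) atTop (nhds 0)

open scoped Classical in
/-- `|A ∩ [1,n]|`. -/
noncomputable def cnt (A : Set ℕ) (n : ℕ) : ℕ :=
  ((Finset.Icc 1 n).filter (fun m => m ∈ A)).card

/-- The ideal `𝒵_g(f)` of sets whose `f`-density of weight `g` is zero
(for nonnegative sequences, `limsup = 0` is equivalent to convergence to `0`). -/
noncomputable def Zd (f : ℝ → ℝ) (g : ℕ → ℝ) : Set (Set ℕ) :=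
  {A | Tendsto (fun n => f (cnt A n) / f (g n)) atTop (nhds 0)}

/-- The `f^g`-statistically characterized subgroup `t^{f,g}_{(a_n)}(𝕋)`. -/
noncomputable def statChar (f : ℝ → ℝ) (g : ℕ → ℝ) (a : ℕ → ℤ) :
    Set (AddCircle (1 : ℝ)) :=
  {x | ∀ ε > 0, {n : ℕ | ε ≤ ‖(a n) • x‖} ∈ Zd f g}

/-- An arithmetic sequence: `a 0 = 1`, strictly increasing, `a n ∣ a (n+1)`,
and all ratios `q_n ≥ 2`. -/
def IsArith (a : ℕ → ℕ) : Prop :=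
  a 0 = 1 ∧ StrictMono a ∧ (∀ n, a n ∣ a (n + 1)) ∧ (∀ n, 2 * a n ≤ a (n + 1))

/-- Canonical representation `x = Σ_{n≥1} c_n / a_n` with `0 ≤ c_n ≤ q_n - 1`
and `c_n < q_n - 1` infinitely often; here `q_n = a n / a (n-1)`. -/
def IsCanonRep (a : ℕ → ℕ) (c : ℕ → ℕ) (x : AddCircle (1 : ℝ)) : Prop :=
  c 0 = 0 ∧ (∀ n, 1 ≤ n → c n ≤ a n / a (n - 1) - 1) ∧
  (∀ N, ∃ n, N ≤ n ∧ c n < a n / a (n - 1) - 1) ∧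
  x = ((∑' n, (c n : ℝ) / (a n : ℝ) : ℝ) : AddCircle (1 : ℝ))

/-!
The first two claims only use `⌊n^β⌋ ≤ n^β < ⌊n^β⌋ + 1`, together with the fact that
`n / g n ↛ 0` forces `log (1 + g n) ≤ 2 log n` infinitely often, so that a set whose counting
function grows like `n^γ` has positive `f`-density of weight `g`.

For the separation fix `t ≥ 2` with `1/t < α` and let `x = ∑ c_n / a_n`, where
`c_n = ⌊q_n / 2⌋` when `n - 1` is a perfect `t`-th power and `c_n = 0` otherwise. Modulo `1`,
`a_m x` is the tail `a_m ∑_{n > m} c_n / a_n`, which is at most `a_m / a_{N-1}` when the digits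
vanish on `(m, N)`. Hence `‖a_m x‖ ≥ 1/4` whenever `m` is a `t`-th power, and there are
`⌊n^{1/t}⌋` of those up to `n`, so `x ∉ t^{f,g}`; while `‖a_m x‖ > 2^{-K}` forces a `t`-th
power in `[m, m + K)`, which happens for only `O(n^{1/t}) = o(n^α)` indices `m ≤ n`.
-/

open scoped Topology

lemma cnt_mono {A B : Set ℕ} (h : A ⊆ B) (n : ℕ) : cnt A n ≤ cnt B n :=
  Finset.card_le_card fun m hm => by
    simp only [Finset.mem_filter] at hm ⊢
    exact ⟨hm.1, h hm.2⟩

lemma tendsto_div_rpow_of_le_mul_rpow {u : ℕ → ℝ} {C γ α : ℝ} (hu₀ : ∀ n, 0 ≤ u n)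
    (hu : ∀ᶠ n : ℕ in atTop, u n ≤ C * (n : ℝ) ^ γ) (hγα : γ < α) :
    Tendsto (fun n : ℕ => u n / (n : ℝ) ^ α) atTop (𝓝 0) := by
  have hlim : Tendsto (fun n : ℕ => C * (n : ℝ) ^ (-(α - γ))) atTop (𝓝 0) := by
    simpa using ((tendsto_rpow_neg_atTop (sub_pos.2 hγα)).comp
      tendsto_natCast_atTop_atTop).const_mul C
  refine squeeze_zero' (.of_forall fun n => div_nonneg (hu₀ n) (by positivity)) ?_ hlim
  filter_upwards [hu, eventually_gt_atTop 0] with n hn hpos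
  have hn₀ : (0 : ℝ) < n := by exact_mod_cast hpos
  calc u n / (n : ℝ) ^ α ≤ C * (n : ℝ) ^ γ / (n : ℝ) ^ α := by gcongr
    _ = C * (n : ℝ) ^ (-(α - γ)) := by rw [mul_div_assoc, neg_sub, Real.rpow_sub hn₀]

lemma IsWeight.frequently_log_one_add_le {g : ℕ → ℝ} (hg : IsWeight g) :
    ∃ᶠ n : ℕ in atTop, Real.log (1 + g n) ≤ 2 * Real.log n := by
  obtain ⟨-, hg_top, hg_ratio⟩ := hg
  rw [Metric.tendsto_nhds] at hg_ratio
  push Not at hg_ratio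
  obtain ⟨δ, hδ, hfreq⟩ := hg_ratio
  refine (hfreq.and_eventually ((hg_top.eventually_ge_atTop 1).and
    (tendsto_natCast_atTop_atTop.eventually_ge_atTop (1 + 1 / δ)))).mono ?_
  rintro n ⟨hratio, hg1, hn⟩
  rw [Real.dist_eq, sub_zero, abs_of_nonneg (by positivity), le_div_iff₀ (by positivity)] at hratio
  have hgn : g n ≤ n / δ := by rw [le_div_iff₀ hδ]; linarith
  have hsq : 1 + g n ≤ (n : ℝ) ^ 2 := by
    have : (n : ℝ) / δ = n * (1 / δ) := by ring
    nlinarith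
  calc Real.log (1 + g n) ≤ Real.log ((n : ℝ) ^ 2) := Real.log_le_log (by linarith) hsq
    _ = 2 * Real.log n := by rw [Real.log_pow]; norm_num

lemma not_mem_Zd_log_of_rpow_le {g : ℕ → ℝ} (hg : IsWeight g) {B : Set ℕ} {γ : ℝ}
    (hγ : 0 < γ) (hB : ∀ᶠ n : ℕ in atTop, (n : ℝ) ^ γ ≤ 1 + cnt B n) :
    B ∉ Zd (fun x => Real.log (1 + x)) g := by
  intro hZ
  have hsmall : ∀ᶠ n : ℕ in atTop,
      Real.log (1 + cnt B n) / Real.log (1 + g n) < γ / 2 :=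
    hZ.eventually (gt_mem_nhds (half_pos hγ))
  obtain ⟨n, hlog_g, hsmall_n, hBn, hg1, hn2⟩ := (hg.frequently_log_one_add_le.and_eventually
    (hsmall.and (hB.and ((hg.2.1.eventually_ge_atTop 1).and (eventually_ge_atTop 2))))).exists
  have hn : (1 : ℝ) < n := by exact_mod_cast hn2
  have hlog_n := Real.log_pos hn
  have hlog_B : γ * Real.log n ≤ Real.log (1 + cnt B n) := by
    rw [← Real.log_rpow (by positivity)]
    exact Real.log_le_log (by positivity) hBn
  rw [div_lt_iff₀ (Real.log_pos (by linarith))] at hsmall_n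
  nlinarith

def powSet (t : ℕ) : Set ℕ := (· ^ t) '' Ici 1

lemma cnt_powSet {t : ℕ} (ht : t ≠ 0) (N : ℕ) :
    cnt (powSet t) N = ⌊(N : ℝ) ^ ((t : ℝ)⁻¹)⌋₊ := by
  classical
  set R := ⌊(N : ℝ) ^ ((t : ℝ)⁻¹)⌋₊
  have hroot (k : ℕ) : k ^ t ≤ N ↔ k ≤ R := by
    rw [Nat.le_floor_iff (by positivity), Real.le_rpow_inv_iff_of_pos (by positivity)
      (by positivity) (by positivity), Real.rpow_natCast]
    exact_mod_cast Iff.rfl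
  have hfilter : (Finset.Icc 1 N).filter (· ∈ powSet t) = (Finset.Icc 1 R).image (· ^ t) := by
    ext m
    simp only [Finset.mem_filter, Finset.mem_Icc, Finset.mem_image]
    constructor
    · rintro ⟨⟨-, hmN⟩, k, hk, rfl⟩
      exact ⟨k, ⟨hk, (hroot k).1 hmN⟩, rfl⟩
    · rintro ⟨k, ⟨hk, hkR⟩, rfl⟩
      exact ⟨⟨Nat.one_le_pow _ _ hk, (hroot k).2 hkR⟩, k, hk, rfl⟩
  rw [cnt, hfilter, Finset.card_image_of_injective _ (Nat.pow_left_injective ht), Nat.card_Icc,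
    Nat.add_sub_cancel]

lemma succ_not_mem_powSet {t m : ℕ} (ht : 2 ≤ t) (hm : m ∈ powSet t) : m + 1 ∉ powSet t := by
  obtain ⟨k, hk, rfl⟩ := hm
  rintro ⟨j, -, hj⟩
  dsimp only at hj
  have hkj : k < j := (Nat.pow_lt_pow_iff_left (n := t) (by omega)).1 (by omega)
  obtain ⟨s, rfl⟩ : ∃ s, t = s + 2 := ⟨t - 2, by omega⟩
  have h₁ : k ^ (s + 1) ≤ (k + 1) ^ (s + 1) := Nat.pow_le_pow_left (by omega) _
  have h₂ : k + 1 ≤ (k + 1) ^ (s + 1) := Nat.le_self_pow (by omega) _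
  have h₃ : (k + 1) ^ (s + 2) ≤ j ^ (s + 2) := Nat.pow_le_pow_left hkj _
  have h₄ : (k + 1) ^ (s + 2) = (k + 1) ^ (s + 1) * k + (k + 1) ^ (s + 1) := by ring
  have h₅ : k ^ (s + 2) = k ^ (s + 1) * k := by ring
  have hk' : 1 ≤ k := hk
  nlinarith

lemma cnt_exists_mem_window_le (S : Set ℕ) (K n : ℕ) :
    cnt {m | ∃ s ∈ S, m ≤ s ∧ s < m + K} n ≤ K * cnt S (n + K) := by
  classical
  rw [mul_comm]
  calc cnt {m | ∃ s ∈ S, m ≤ s ∧ s < m + K} n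
      ≤ (((Finset.Icc 1 (n + K)).filter (· ∈ S)).biUnion fun s => Finset.Ioc (s - K) s).card := by
        refine Finset.card_le_card fun m hm => ?_
        simp only [Finset.mem_filter, Finset.mem_Icc] at hm
        obtain ⟨⟨hm1, hmn⟩, s, hs, hms, hsK⟩ := hm
        simp only [Finset.mem_biUnion, Finset.mem_filter, Finset.mem_Icc, Finset.mem_Ioc]
        exact ⟨s, ⟨⟨by omega, by omega⟩, hs⟩, by omega, hms⟩
    _ ≤ cnt S (n + K) * K :=
        Finset.card_biUnion_le_card_mul _ _ _ fun s _ => by rw [Nat.card_Ioc]; omega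

namespace IsArith

variable {a : ℕ → ℕ}

lemma pos (ha : IsArith a) (n : ℕ) : 0 < a n :=
  Nat.one_pos.trans_le (ha.1 ▸ ha.2.1.monotone (Nat.zero_le n))

lemma dvd_of_le (ha : IsArith a) {m n : ℕ} (h : m ≤ n) : a m ∣ a n := by
  induction h with
  | refl => rfl
  | step _ ih => exact ih.trans (ha.2.2.1 _)

lemma two_pow_mul_le (ha : IsArith a) (m k : ℕ) : 2 ^ k * a m ≤ a (m + k) := by
  induction k with
  | zero => simp
  | succ k ih => rw [pow_succ, ← add_assoc]; linarith [ha.2.2.2 (m + k)]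

end IsArith

noncomputable def tailSum (a c : ℕ → ℕ) (N : ℕ) : ℝ := ∑' i, (c (i + N) : ℝ) / a (i + N)

lemma AddCircle.coe_natCast_eq_zero (J : ℕ) : ((J : ℝ) : AddCircle (1 : ℝ)) = 0 := by
  rw [← nsmul_one, AddCircle.coe_nsmul, AddCircle.coe_period, smul_zero]

section Digits

variable {a c : ℕ → ℕ}

lemma digit_div_le_geometric (ha : IsArith a) (hc : ∀ n, 2 * c n * a (n - 1) ≤ a n)
    {N : ℕ} (hN : 1 ≤ N) (i : ℕ) :
    (c (i + N) : ℝ) / a (i + N) ≤ 1 / 2 / 2 ^ i / a (N - 1) := by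
  have hdigit : ((2 * c (i + N) * a (i + N - 1) : ℕ) : ℝ) ≤ a (i + N) := by exact_mod_cast hc _
  have hgrowth : ((2 ^ i * a (N - 1) : ℕ) : ℝ) ≤ a (i + N - 1) := by
    have := ha.two_pow_mul_le (N - 1) i
    rwa [show N - 1 + i = i + N - 1 by omega, ← Nat.cast_le (α := ℝ)] at this
  have hpos : (0 : ℝ) < a (i + N) := by exact_mod_cast ha.pos _
  have hpos' : (0 : ℝ) < a (N - 1) := by exact_mod_cast ha.pos _
  push_cast at hdigit hgrowth
  rw [div_div, div_div, div_le_div_iff₀ hpos (by positivity)]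
  nlinarith [mul_le_mul_of_nonneg_left hgrowth (by positivity : (0 : ℝ) ≤ 2 * c (i + N))]

lemma summable_tail (ha : IsArith a) (hc : ∀ n, 2 * c n * a (n - 1) ≤ a n) (N : ℕ) :
    Summable fun i => (c (i + N) : ℝ) / a (i + N) := by
  have h₁ : Summable fun i => (c (i + 1) : ℝ) / a (i + 1) := by
    refine .of_nonneg_of_le (fun _ => by positivity) (digit_div_le_geometric ha hc le_rfl) ?_
    exact (summable_geometric_two' 1).div_const _
  exact (summable_nat_add_iff N).2 ((summable_nat_add_iff (f := fun n => (c n : ℝ) / a n) 1).1 h₁)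

lemma tailSum_nonneg (N : ℕ) : 0 ≤ tailSum a c N := tsum_nonneg fun _ => by positivity

lemma tailSum_le (ha : IsArith a) (hc : ∀ n, 2 * c n * a (n - 1) ≤ a n) {N : ℕ} (hN : 1 ≤ N) :
    tailSum a c N ≤ 1 / a (N - 1) :=
  calc tailSum a c N ≤ ∑' i : ℕ, 1 / 2 / 2 ^ i / (a (N - 1) : ℝ) :=
        (summable_tail ha hc N).tsum_le_tsum (digit_div_le_geometric ha hc hN)
          ((summable_geometric_two' 1).div_const _)
    _ = 1 / a (N - 1) := by rw [tsum_div_const, tsum_geometric_two']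

lemma tailSum_eq_add (ha : IsArith a) (hc : ∀ n, 2 * c n * a (n - 1) ≤ a n) (N : ℕ) :
    tailSum a c N = c N / a N + tailSum a c (N + 1) := by
  rw [tailSum, (summable_tail ha hc N).tsum_eq_zero_add, tailSum, zero_add]
  simp only [add_right_comm _ 1 N, add_assoc]

lemma tailSum_eq_of_digits_eq_zero (ha : IsArith a) (hc : ∀ n, 2 * c n * a (n - 1) ≤ a n)
    {N M : ℕ} (hNM : N ≤ M) (hzero : ∀ n, N ≤ n → n < M → c n = 0) :
    tailSum a c N = tailSum a c M := by
  induction hNM with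
  | refl => rfl
  | @step M hle ih =>
    rw [ih fun n h₁ h₂ => hzero n h₁ (by omega), tailSum_eq_add ha hc M, hzero M hle (by omega),
      Nat.cast_zero, zero_div, zero_add]

lemma zsmul_tailSum_zero (ha : IsArith a) (hc : ∀ n, 2 * c n * a (n - 1) ≤ a n) (m : ℕ) :
    (a m : ℤ) • ((tailSum a c 0 : ℝ) : AddCircle (1 : ℝ)) =
      ((a m * tailSum a c (m + 1) : ℝ) : AddCircle (1 : ℝ)) := by
  have hsplit : tailSum a c 0 =
      ∑ n ∈ Finset.range (m + 1), (c n : ℝ) / a n + tailSum a c (m + 1) := by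
    simpa [tailSum] using ((summable_tail ha hc 0).sum_add_tsum_nat_add (m + 1)).symm
  have hint : (a m : ℝ) * ∑ n ∈ Finset.range (m + 1), (c n : ℝ) / a n =
      ((∑ n ∈ Finset.range (m + 1), a m / a n * c n : ℕ) : ℝ) := by
    push_cast
    rw [Finset.mul_sum]
    refine Finset.sum_congr rfl fun n hn => ?_
    rw [Nat.cast_div (ha.dvd_of_le (Finset.mem_range_succ_iff.1 hn))
      (by exact_mod_cast (ha.pos n).ne')]
    ring
  rw [← AddCircle.coe_zsmul, zsmul_eq_mul, Int.cast_natCast, hsplit, mul_add, hint, AddCircle.coe_add,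
    AddCircle.coe_natCast_eq_zero, zero_add]

end Digits

lemma AddCircle.norm_coe_le_abs (r : ℝ) : ‖(r : AddCircle (1 : ℝ))‖ ≤ |r| := by
  simpa [AddCircle.norm_eq] using round_le r 0

lemma AddCircle.quarter_le_norm_coe {r : ℝ} (h₁ : 1 / 4 ≤ r) (h₂ : r ≤ 3 / 4) :
    1 / 4 ≤ ‖(r : AddCircle (1 : ℝ))‖ := by
  rw [UnitAddCircle.norm_eq, abs_sub_round_eq_min,
    Int.fract_eq_self.2 ⟨by linarith, by linarith⟩]
  exact le_min h₁ (by linarith)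

open scoped Classical in
noncomputable def halfDigit (a : ℕ → ℕ) (D : Set ℕ) (n : ℕ) : ℕ :=
  if n ∈ D then a n / a (n - 1) / 2 else 0

lemma two_mul_halfDigit_mul_le (a : ℕ → ℕ) (D : Set ℕ) (n : ℕ) :
    2 * halfDigit a D n * a (n - 1) ≤ a n := by
  unfold halfDigit
  split_ifs
  · calc 2 * (a n / a (n - 1) / 2) * a (n - 1) ≤ a n / a (n - 1) * a (n - 1) :=
          Nat.mul_le_mul_right _ (Nat.mul_div_le _ 2)
      _ ≤ a n := Nat.div_mul_le_self _ _
  · simp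

lemma le_three_mul_halfDigit_mul {a : ℕ → ℕ} (ha : IsArith a) {D : Set ℕ} {n : ℕ}
    (hn : n + 1 ∈ D) : a (n + 1) ≤ 3 * halfDigit a D (n + 1) * a n := by
  have hq : a (n + 1) / a n * a n = a (n + 1) := Nat.div_mul_cancel (ha.2.2.1 n)
  have hq₂ : 2 ≤ a (n + 1) / a n := (Nat.le_div_iff_mul_le (ha.pos n)).2 (ha.2.2.2 n)
  simp only [halfDigit, if_pos hn, Nat.add_sub_cancel]
  calc a (n + 1) = a (n + 1) / a n * a n := hq.symm
    _ ≤ 3 * (a (n + 1) / a n / 2) * a n := Nat.mul_le_mul_right _ (by omega)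

lemma quarter_le_norm_zsmul_tailSum_halfDigit {a : ℕ → ℕ} (ha : IsArith a) {D : Set ℕ} {m : ℕ}
    (hm₁ : m + 1 ∈ D) (hm₂ : m + 2 ∉ D) :
    1 / 4 ≤ ‖(a m : ℤ) • ((tailSum a (halfDigit a D) 0 : ℝ) : AddCircle (1 : ℝ))‖ := by
  set c := halfDigit a D
  have hc := two_mul_halfDigit_mul_le a D
  have hpos₀ : (0 : ℝ) < a m := by exact_mod_cast ha.pos m
  have hpos₁ : (0 : ℝ) < a (m + 1) := by exact_mod_cast ha.pos (m + 1)
  have hpos₂ : (0 : ℝ) < a (m + 2) := by exact_mod_cast ha.pos (m + 2)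
  have hdigit_lo : ((a (m + 1) : ℕ) : ℝ) ≤ ((3 * c (m + 1) * a m : ℕ) : ℝ) := by
    exact_mod_cast le_three_mul_halfDigit_mul ha hm₁
  have hdigit_hi : ((2 * c (m + 1) * a m : ℕ) : ℝ) ≤ a (m + 1) := by exact_mod_cast hc (m + 1)
  have hgrowth : ((2 ^ 2 * a m : ℕ) : ℝ) ≤ a (m + 2) := by exact_mod_cast ha.two_pow_mul_le m 2
  push_cast at hdigit_lo hdigit_hi hgrowth
  have htail : tailSum a c (m + 2) ≤ 1 / a (m + 2) := by
    rw [tailSum_eq_of_digits_eq_zero ha hc (M := m + 3) (by omega) fun n h₁ h₂ => by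
      obtain rfl : n = m + 2 := by omega
      simp [halfDigit, hm₂]]
    exact tailSum_le ha hc (by omega)
  have hfirst_lo : 1 / 3 ≤ a m * c (m + 1) / (a (m + 1) : ℝ) := by
    rw [le_div_iff₀ hpos₁]; linarith
  have hfirst_hi : a m * c (m + 1) / (a (m + 1) : ℝ) ≤ 1 / 2 := by
    rw [div_le_iff₀ hpos₁]; linarith
  have hrest : a m * tailSum a c (m + 2) ≤ 1 / 4 :=
    calc a m * tailSum a c (m + 2) ≤ a m * (1 / a (m + 2)) := by gcongr
      _ ≤ 1 / 4 := by rw [mul_one_div, div_le_iff₀ hpos₂]; linarith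
  have hrest₀ : 0 ≤ a m * tailSum a c (m + 2) := by
    have := tailSum_nonneg (a := a) (c := c) (m + 2); positivity
  rw [zsmul_tailSum_zero ha hc, tailSum_eq_add ha hc, mul_add, ← mul_div_assoc]
  exact AddCircle.quarter_le_norm_coe (by linarith) (by linarith)

lemma exists_digit_ne_zero_of_le_norm_zsmul_tailSum {a c : ℕ → ℕ} (ha : IsArith a)
    (hc : ∀ n, 2 * c n * a (n - 1) ≤ a n) {ε : ℝ} {K m : ℕ} (hK : (1 / 2 : ℝ) ^ K < ε)
    (hm : ε ≤ ‖(a m : ℤ) • ((tailSum a c 0 : ℝ) : AddCircle (1 : ℝ))‖) :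
    ∃ n, m < n ∧ n ≤ m + K ∧ c n ≠ 0 := by
  by_contra! hzero
  rw [zsmul_tailSum_zero ha hc, tailSum_eq_of_digits_eq_zero ha hc (M := m + K + 1) (by omega)
    fun n h₁ h₂ => hzero n (by omega) (by omega)] at hm
  have htail : tailSum a c (m + K + 1) ≤ 1 / a (m + K) := tailSum_le ha hc (by omega)
  have hgrowth : ((2 ^ K * a m : ℕ) : ℝ) ≤ a (m + K) := by exact_mod_cast ha.two_pow_mul_le m K
  have hpos : (0 : ℝ) < a (m + K) := by exact_mod_cast ha.pos (m + K)
  push_cast at hgrowth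
  have := AddCircle.norm_coe_le_abs (a m * tailSum a c (m + K + 1))
  rw [abs_of_nonneg (mul_nonneg (Nat.cast_nonneg _) (tailSum_nonneg _))] at this
  have hsmall : a m * tailSum a c (m + K + 1) ≤ (1 / 2 : ℝ) ^ K :=
    calc a m * tailSum a c (m + K + 1) ≤ a m * (1 / a (m + K)) := by gcongr
      _ ≤ (1 / 2 : ℝ) ^ K := by
        rw [mul_one_div, one_div_pow, div_le_div_iff₀ hpos (by positivity)]; linarith
  linarith

noncomputable def powerPoint (a : ℕ → ℕ) (t : ℕ) : AddCircle (1 : ℝ) :=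
  (tailSum a (halfDigit a ((· + 1) '' powSet t)) 0 : ℝ)

section powerPoint

variable {a : ℕ → ℕ} {t : ℕ}

lemma powSet_subset_quarter_le_norm_zsmul_powerPoint (ha : IsArith a) (ht : 2 ≤ t) :
    powSet t ⊆ {m | 1 / 4 ≤ ‖(a m : ℤ) • powerPoint a t‖} := fun _ hm =>
  quarter_le_norm_zsmul_tailSum_halfDigit ha ((add_left_injective 1).mem_set_image.2 hm)
    ((add_left_injective 1).mem_set_image.not.2 (succ_not_mem_powSet ht hm))

lemma le_norm_zsmul_powerPoint_subset (ha : IsArith a) {ε : ℝ} {K : ℕ}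
    (hK : (1 / 2 : ℝ) ^ K < ε) :
    {m | ε ≤ ‖(a m : ℤ) • powerPoint a t‖} ⊆ {m | ∃ s ∈ powSet t, m ≤ s ∧ s < m + K} := by
  intro m hm
  obtain ⟨n, hmn, hnK, hn⟩ := exists_digit_ne_zero_of_le_norm_zsmul_tailSum ha
    (two_mul_halfDigit_mul_le a _) hK hm
  obtain ⟨s, hs, rfl⟩ : n ∈ (· + 1) '' powSet t := by
    by_contra h
    simp [halfDigit, h] at hn
  dsimp only at hmn hnK
  exact ⟨s, hs, by omega, by omega⟩

lemma powerPoint_not_mem_statChar {g : ℕ → ℝ} (hg : IsWeight g) (ha : IsArith a) (ht : 2 ≤ t) :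
    powerPoint a t ∉ statChar (fun x => Real.log (1 + x)) g (fun n => (a n : ℤ)) := fun hx => by
  refine not_mem_Zd_log_of_rpow_le (B := {m | 1 / 4 ≤ ‖(a m : ℤ) • powerPoint a t‖}) hg
    (γ := (t : ℝ)⁻¹) (by positivity) (.of_forall fun n => ?_) (hx (1 / 4) (by norm_num))
  have hcnt := cnt_mono (powSet_subset_quarter_le_norm_zsmul_powerPoint ha ht) n
  rw [cnt_powSet (by omega)] at hcnt
  have hfloor := Nat.lt_floor_add_one ((n : ℝ) ^ (t : ℝ)⁻¹)
  have : (⌊(n : ℝ) ^ (t : ℝ)⁻¹⌋₊ : ℝ) ≤ cnt {m | 1 / 4 ≤ ‖(a m : ℤ) • powerPoint a t‖} n := by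
    exact_mod_cast hcnt
  linarith

lemma tendsto_cnt_le_norm_zsmul_powerPoint_div_rpow (ha : IsArith a) (ht : t ≠ 0) {α : ℝ}
    (htα : (t : ℝ)⁻¹ < α) {ε : ℝ} (hε : 0 < ε) :
    Tendsto (fun n : ℕ => (cnt {m | ε ≤ ‖(a m : ℤ) • powerPoint a t‖} n : ℝ) / (n : ℝ) ^ α)
      atTop (𝓝 0) := by
  obtain ⟨K, hK⟩ := exists_pow_lt_of_lt_one hε (by norm_num : (1 / 2 : ℝ) < 1)
  refine tendsto_div_rpow_of_le_mul_rpow (C := K * 2 ^ (t : ℝ)⁻¹) (fun _ => by positivity) ?_ htα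
  filter_upwards [eventually_ge_atTop K] with n hn
  have hcnt : cnt {m | ε ≤ ‖(a m : ℤ) • powerPoint a t‖} n ≤
      K * ⌊((n + K : ℕ) : ℝ) ^ (t : ℝ)⁻¹⌋₊ := by
    rw [← cnt_powSet ht]
    exact (cnt_mono (le_norm_zsmul_powerPoint_subset ha hK) n).trans
      (cnt_exists_mem_window_le _ K n)
  have hnK : (K : ℝ) ≤ n := by exact_mod_cast hn
  calc (cnt {m | ε ≤ ‖(a m : ℤ) • powerPoint a t‖} n : ℝ)
      ≤ K * ⌊((n + K : ℕ) : ℝ) ^ (t : ℝ)⁻¹⌋₊ := by exact_mod_cast hcnt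
    _ ≤ K * ((n + K : ℕ) : ℝ) ^ (t : ℝ)⁻¹ := by gcongr; exact Nat.floor_le (by positivity)
    _ ≤ K * (2 * n : ℝ) ^ (t : ℝ)⁻¹ := by gcongr; push_cast; linarith
    _ = K * 2 ^ (t : ℝ)⁻¹ * (n : ℝ) ^ (t : ℝ)⁻¹ := by
      rw [Real.mul_rpow (by norm_num) (by positivity), mul_assoc]

end powerPoint

theorem stmt18_general (g : ℕ → ℝ) (hg : IsWeight g) (α β : ℝ)
    (hβ : 0 < β) (hβα : β < α)
    (A : Set ℕ) (hA : ∀ n : ℕ, cnt A n = ⌊(n : ℝ) ^ β⌋₊) :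
    Tendsto (fun n : ℕ => (cnt A n : ℝ) / (n : ℝ) ^ α) atTop (nhds 0) ∧
    A ∉ Zd (fun x => Real.log (1 + x)) g ∧
    ∀ a : ℕ → ℕ, IsArith a →
      statChar (fun x => Real.log (1 + x)) g (fun n => (a n : ℤ)) ≠
        {x : AddCircle (1 : ℝ) | ∀ ε > 0,
          Tendsto (fun n : ℕ =>
            (cnt {m | ε ≤ ‖((a m : ℤ)) • x‖} n : ℝ) / (n : ℝ) ^ α) atTop (nhds 0)} := by
  refine ⟨?_, ?_, fun a ha hchar => ?_⟩
  · refine tendsto_div_rpow_of_le_mul_rpow (C := 1) (fun _ => by positivity)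
      (.of_forall fun n => ?_) hβα
    rw [hA, one_mul]
    exact Nat.floor_le (by positivity)
  · refine not_mem_Zd_log_of_rpow_le hg hβ (.of_forall fun n => ?_)
    rw [hA]
    linarith [Nat.lt_floor_add_one ((n : ℝ) ^ β)]
  · obtain ⟨t, ht⟩ := exists_nat_gt (max 1 α⁻¹)
    have ht₂ : 2 ≤ t := Nat.one_lt_cast.1 ((le_max_left _ _).trans_lt ht)
    have htα : (t : ℝ)⁻¹ < α := inv_lt_of_inv_lt₀ (hβ.trans hβα) ((le_max_right _ _).trans_lt ht)
    refine powerPoint_not_mem_statChar hg ha ht₂ ?_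
    rw [hchar]
    exact fun ε hε => tendsto_cnt_le_norm_zsmul_powerPoint_div_rpow ha (by omega) htα hε

theorem stmt18 (g : ℕ → ℝ) (hg : IsWeight g) (α β : ℝ)
    (hβ : 0 < β) (hβα : β < α) (hα : α < 1)
    (A : Set ℕ) (hA : ∀ n : ℕ, cnt A n = ⌊(n : ℝ) ^ β⌋₊) :
    Tendsto (fun n : ℕ => (cnt A n : ℝ) / (n : ℝ) ^ α) atTop (nhds 0) ∧
    A ∉ Zd (fun x => Real.log (1 + x)) g ∧
    ∀ a : ℕ → ℕ, IsArith a →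
      statChar (fun x => Real.log (1 + x)) g (fun n => (a n : ℤ)) ≠
        {x : AddCircle (1 : ℝ) | ∀ ε > 0,
          Tendsto (fun n : ℕ =>
            (cnt {m | ε ≤ ‖((a m : ℤ)) • x‖} n : ℝ) / (n : ℝ) ^ α) atTop (nhds 0)} :=
  stmt18_general g hg α β hβ hβα A hA
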